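/- For every i ≥ 0 one has Y_i = π^{i+1}·B_i^⊥ ∩ B_i, where the intersection is taken inside V and π^{i+1}·B_i^⊥ = {π^{i+1}x : x ∈ B_i^⊥}. Consequently every isometry g of (L,h) satisfies g(Y_i) = Y_i. -/

import Mathlib

/-- For a subset `M ⊆ V`, the "dual" set `M^⊥ = {x ∈ V : H(x,M) ⊆ B}`. -/
def perpSet (B : Type*) {E V : Type*} [CommRing B] [Field E] [Algebra B E]
    [AddCommGroup V] [Module E V] (H : V → V → E) (S : Set V) : Set V :=
  {x | ∀ y ∈ S, ∃ b : B, H x y = algebraMap B E b}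

/-- `A_i = {x ∈ L : h(x,L) ⊆ π^i B}`, viewed inside `V`. -/
def AiSetV {B E V : Type*} [CommRing B] [Field E] [Algebra B E]
    [AddCommGroup V] [Module E V] [Module B V]
    (L : Submodule B V) (π : B) (H : V → V → E) (i : ℕ) : Set V :=
  {x | x ∈ L ∧ ∀ w ∈ L, ∃ b : B, H x w = algebraMap B E (π ^ i * b)}

/-- `B_i = {x ∈ A_i : h(x,x) ∈ 2^{m+1} A}` where `m = ⌈i/2⌉`, viewed inside `V`. -/
def BiSetV (A : Type*) {B E V : Type*} [CommRing A] [CommRing B] [Field E]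
    [Algebra B E] [Algebra A E] [AddCommGroup V] [Module E V] [Module B V]
    (L : Submodule B V) (π : B) (H : V → V → E) (i : ℕ) : Set V :=
  {x | x ∈ AiSetV L π H i ∧ ∃ a : A, H x x = algebraMap A E (2 ^ ((i + 1) / 2 + 1) * a)}

/-- `Y_i = {x ∈ B_i : h(x,B_i) ⊆ π^{i+1} B}`, viewed inside `V`. -/
def YiSetV (A : Type*) {B E V : Type*} [CommRing A] [CommRing B] [Field E]
    [Algebra B E] [Algebra A E] [AddCommGroup V] [Module E V] [Module B V]
    (L : Submodule B V) (π : B) (H : V → V → E) (i : ℕ) : Set V :=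
  {x | x ∈ BiSetV A L π H i ∧
    ∀ w ∈ BiSetV A L π H i, ∃ b : B, H x w = algebraMap B E (π ^ (i + 1) * b)}

/-!
Since `σ(π) = -π`, sesquilinearity gives `h(π^{i+1} x, w) = ± π^{i+1} h(x, w)`, so `π^{i+1}·M^⊥`
is exactly the set of vectors pairing into `π^{i+1} B` with `M`; applied to `M = B_i` this is the
defining condition of `Y_i`. The sets `A_i`, `B_i`, `Y_i` are defined from `L` and `h` alone, hence
are stable under every isometry stabilizing `L`.
-/

theorem algebraMap_injective_of_existsUnique_repr {A B : Type*} [CommRing A] [CommRing B]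
    [Algebra A B] {π : B}
    (hrepr : ∀ b : B, ∃! p : A × A, b = algebraMap A B p.1 + algebraMap A B p.2 * π) :
    Function.Injective (algebraMap A B) := by
  intro a a' h
  obtain ⟨p, -, huniq⟩ := hrepr (algebraMap A B a)
  have ha : (a, 0) = p := huniq (a, 0) (by simp)
  have ha' : (a', 0) = p := huniq (a', 0) (by simp [h])
  simpa using congrArg Prod.fst (ha.trans ha'.symm)

theorem ne_zero_of_sq_eq_algebraMap_two_mul {A B : Type*} [CommRing A] [CharZero A]
    [CommRing B] [Algebra A B] (hinj : Function.Injective (algebraMap A B)) {δ : A}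
    (hδ : IsUnit δ) {π : B} (hπ : π ^ 2 = algebraMap A B (2 * δ)) : π ≠ 0 := by
  rintro rfl
  have h2δ : 2 * δ = 0 := hinj (by rw [← hπ, map_zero, zero_pow two_ne_zero])
  exact two_ne_zero (hδ.mul_left_eq_zero.mp h2δ)

section ScaledDual

variable {B E V : Type*} [CommRing B] [Field E] [Algebra B E] [AddCommGroup V] [Module E V]
  [Module B V] [IsScalarTower B E V] {σE : E ≃+* E} {H : V → V → E}

theorem mem_smul_perpSet_iff (hH : ∀ (a : E) (v w : V), H (a • v) w = σE a * H v w)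
    {c : B} (hc : algebraMap B E c ≠ 0) (u : Bˣ)
    (hσc : σE (algebraMap B E c) = algebraMap B E (u * c)) (S : Set V) (v : V) :
    (∃ x ∈ perpSet B H S, v = c • x) ↔ ∀ w ∈ S, ∃ b : B, H v w = algebraMap B E (c * b) := by
  constructor
  · rintro ⟨x, hx, rfl⟩ w hw
    obtain ⟨b, hb⟩ := hx w hw
    refine ⟨u * b, ?_⟩
    rw [← algebraMap_smul E c x, hH, hb, hσc]
    simp only [map_mul]
    ring
  · intro hv
    refine ⟨(algebraMap B E c)⁻¹ • v, fun w hw => ?_, ?_⟩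
    · obtain ⟨b, hb⟩ := hv w hw
      have hu : algebraMap B E u ≠ 0 := (u.isUnit.map (algebraMap B E)).ne_zero
      refine ⟨↑u⁻¹ * b, ?_⟩
      rw [hH, hb, map_inv₀, hσc]
      simp only [map_mul, map_units_inv]
      field_simp
    · rw [← algebraMap_smul E c, smul_smul, mul_inv_cancel₀ hc, one_smul]

end ScaledDual

section Isometry

theorem forall_mem_comp_iff_of_image_eq {α : Type*} {g : α → α} {S : Set α} (hgS : g '' S = S)
    (P : α → Prop) : (∀ w ∈ S, P (g w)) ↔ ∀ w ∈ S, P w := by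
  conv_rhs => rw [← hgS]
  exact Set.forall_mem_image.symm

variable {A B E V : Type*} [CommRing A] [CommRing B] [Field E] [Algebra B E] [Algebra A E]
  [AddCommGroup V] [Module E V] [Module B V] {H : V → V → E} {g : V → V}
  (hg : g.Bijective) (hH : ∀ x y : V, H (g x) (g y) = H x y) {L : Submodule B V}
  (hgL : g '' L = L) (π : B) (i : ℕ)
include hg hH hgL

theorem preimage_AiSetV : g ⁻¹' AiSetV L π H i = AiSetV L π H i := by
  ext x
  have hx : g x ∈ L ↔ x ∈ L := by
    rw [← SetLike.mem_coe, ← hgL, hg.injective.mem_set_image, SetLike.mem_coe]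
  simp only [AiSetV, Set.mem_preimage, Set.mem_ofPred_eq, hx]
  refine and_congr_right fun _ => ?_
  have := forall_mem_comp_iff_of_image_eq hgL
    (fun w => ∃ b : B, H (g x) w = algebraMap B E (π ^ i * b))
  simpa only [SetLike.mem_coe, hH] using this.symm

theorem preimage_BiSetV : g ⁻¹' BiSetV A L π H i = BiSetV A L π H i := by
  ext x
  have hx := Set.ext_iff.mp (preimage_AiSetV hg hH hgL π i) x
  simp only [BiSetV, Set.mem_preimage, Set.mem_ofPred_eq] at hx ⊢
  rw [hx, hH]

theorem preimage_YiSetV : g ⁻¹' YiSetV A L π H i = YiSetV A L π H i := by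
  ext x
  have hB : g '' BiSetV A L π H i = BiSetV A L π H i :=
    (Set.eq_preimage_iff_image_eq hg).mp (preimage_BiSetV hg hH hgL π i).symm
  have hx := Set.ext_iff.mp (preimage_BiSetV (A := A) hg hH hgL π i) x
  simp only [YiSetV, Set.mem_preimage, Set.mem_ofPred_eq] at hx ⊢
  rw [hx]
  refine and_congr_right fun _ => ?_
  have := forall_mem_comp_iff_of_image_eq hB
    (fun w => ∃ b : B, H (g x) w = algebraMap B E (π ^ (i + 1) * b))
  simpa only [hH] using this.symm

end Isometry

theorem Yi_eq_scaled_dual_inter_general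
    {A : Type*} [CommRing A] [CharZero A]
    (δ : A) (hδunit : IsUnit δ)
    {B : Type*} [CommRing B] [Algebra A B]
    (π : B) (hπ : π ^ 2 = algebraMap A B (2 * δ))
    (σ : B ≃ₐ[A] B) (hσπ : σ π = -π)
    (hBfree : ∀ b : B, ∃! p : A × A, b = algebraMap A B p.1 + algebraMap A B p.2 * π)
    {E : Type*} [Field E] [Algebra B E] [IsFractionRing B E]
    [Algebra A E]
    (σE : E ≃+* E) (hσE : ∀ b : B, σE (algebraMap B E b) = algebraMap B E (σ b))
    {V : Type*} [AddCommGroup V] [Module E V] [Module B V] [IsScalarTower B E V]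
    (H : V → V → E)
    (Hsmul : ∀ (a b : E) (v w : V), H (a • v) (b • w) = σE a * b * H v w)
    (L : Submodule B V)
    (i : ℕ) :
    YiSetV A L π H i
      = {v : V | ∃ x ∈ perpSet B H (BiSetV A L π H i), v = (π ^ (i + 1)) • x}
          ∩ BiSetV A L π H i ∧
    ∀ (g : V ≃ₗ[E] V), (∀ x y : V, H (g x) (g y) = H x y) →
      g '' (L : Set V) = (L : Set V) →
      g '' YiSetV A L π H i = YiSetV A L π H i := by
  have hπ0 : π ≠ 0 := ne_zero_of_sq_eq_algebraMap_two_mul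
    (algebraMap_injective_of_existsUnique_repr hBfree) hδunit hπ
  have hc : algebraMap B E (π ^ (i + 1)) ≠ 0 := by
    rw [map_pow]
    exact pow_ne_zero _ ((map_ne_zero_iff _ (IsFractionRing.injective B E)).mpr hπ0)
  have hσc : σE (algebraMap B E (π ^ (i + 1)))
      = algebraMap B E (↑((-1 : Bˣ) ^ (i + 1)) * π ^ (i + 1)) := by
    rw [hσE, map_pow, hσπ, neg_pow]
    push_cast
    rfl
  have hH : ∀ (a : E) (v w : V), H (a • v) w = σE a * H v w := fun a v w => by
    simpa using Hsmul a 1 v w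
  refine ⟨?_, fun g hg hgL => ?_⟩
  · ext v
    rw [Set.mem_inter_iff, Set.mem_ofPred_eq, mem_smul_perpSet_iff hH hc _ hσc]
    exact and_comm
  · exact (Set.eq_preimage_iff_image_eq g.bijective).mp
      (preimage_YiSetV g.bijective hg hgL π i).symm

/-- `Y_i = π^{i+1}·B_i^⊥ ∩ B_i` inside `V`; consequently every isometry of
`(L,h)` stabilizes `Y_i`. -/
theorem Yi_eq_scaled_dual_inter
    {A : Type*} [CommRing A] [IsDomain A] [IsDiscreteValuationRing A] [CharZero A]
    (hmax : IsLocalRing.maximalIdeal A = Ideal.span {2})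
    [IsAdicComplete (IsLocalRing.maximalIdeal A) A]
    [CharP (IsLocalRing.ResidueField A) 2]
    [PerfectRing (IsLocalRing.ResidueField A) 2]
    (δ : A) (hδunit : IsUnit δ) (hδ1 : (2 : A) ∣ (δ - 1))
    {B : Type*} [CommRing B] [IsDomain B] [Algebra A B]
    (π : B) (hπ : π ^ 2 = algebraMap A B (2 * δ))
    (σ : B ≃ₐ[A] B) (hσπ : σ π = -π) (hσinv : ∀ b : B, σ (σ b) = b)
    (hBfree : ∀ b : B, ∃! p : A × A, b = algebraMap A B p.1 + algebraMap A B p.2 * π)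
    {E : Type*} [Field E] [Algebra B E] [IsFractionRing B E]
    [Algebra A E] [IsScalarTower A B E]
    (σE : E ≃+* E) (hσE : ∀ b : B, σE (algebraMap B E b) = algebraMap B E (σ b))
    {V : Type*} [AddCommGroup V] [Module E V] [Module B V] [IsScalarTower B E V]
    (H : V → V → E)
    (Hadd : ∀ x y z : V, H (x + y) z = H x z + H y z)
    (Hsmul : ∀ (a b : E) (v w : V), H (a • v) (b • w) = σE a * b * H v w)
    (Hsymm : ∀ v w : V, H w v = σE (H v w))
    (Hnd : ∀ v : V, (∀ w : V, H v w = 0) → v = 0)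
    (L : Submodule B V) [Module.Free B L] [Module.Finite B L]
    (hLspan : Submodule.span E (L : Set V) = ⊤)
    (hLB : ∀ x ∈ L, ∀ y ∈ L, ∃ b : B, H x y = algebraMap B E b)
    (i : ℕ) :
    YiSetV A L π H i
      = {v : V | ∃ x ∈ perpSet B H (BiSetV A L π H i), v = (π ^ (i + 1)) • x}
          ∩ BiSetV A L π H i ∧
    ∀ (g : V ≃ₗ[E] V), (∀ x y : V, H (g x) (g y) = H x y) →
      g '' (L : Set V) = (L : Set V) →
      g '' YiSetV A L π H i = YiSetV A L π H i :=
  Yi_eq_scaled_dual_inter_general δ hδunit π hπ σ hσπ hBfree σE hσE H Hsmul L i
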